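/- Let r be a positive integer, 𝕂 a field containing a primitive r-th root of unity z, and G a chordal simple graph on vertex set {1,…,ℓ} with perfect elimination ordering (v_1,…,v_ℓ). Then for every integer t, χ(M(G,r), t) = ∏_{k=1}^{ℓ} (t − r·|E_{<k}| − 1). -/

import Mathlib

open Finset
open scoped Classical

/-- The characteristic polynomial of a finite set of (hyper)planes, evaluated at an
integer `t`:  `χ(A,t) = Σ_{I ⊆ A} (−1)^{|I|} t^{dim ∩_{H ∈ I} H}`, the empty
intersection being the whole space. -/
noncomputable def chi {K V : Type} [Field K] [Fintype V]
    (A : Finset (Submodule K (V → K))) (t : ℤ) : ℤ :=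
  ∑ I ∈ A.powerset, (-1) ^ I.card * t ^ (Module.finrank K ↥(I.inf id))
/-- The graphic monomial arrangement `M(G,r)`: the hyperplanes `{x_i − z^k x_j = 0}`
for every edge `{i,j}` of `G` and `1 ≤ k ≤ r`, together with the coordinate
hyperplanes `{x_i = 0}`. -/
noncomputable def monArr (K : Type) [Field K] (z : K) (r : ℕ) {V : Type} [Fintype V]
    (G : SimpleGraph V) : Finset (Submodule K (V → K)) :=
  (Finset.univ.image fun i : V =>
      LinearMap.ker (LinearMap.proj i : (V → K) →ₗ[K] K)) ∪
  (((Finset.univ : Finset (V × V)).filter (fun p => G.Adj p.1 p.2)).biUnion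
    (fun p => (Finset.range r).image fun k =>
      LinearMap.ker
        ((LinearMap.proj p.1 : (V → K) →ₗ[K] K) - z ^ (k + 1) • LinearMap.proj p.2)))

/-!
Add the vertices one at a time in the elimination order. When `v_k` joins the vertices before it,
the new hyperplanes are `x_{v_k} = 0` and `x_a = ζ x_{v_k}` for the earlier neighbours `a` and the
`r`-th roots of unity `ζ`: there are `r |E_{<k}| + 1` of them. Because the earlier neighbours form a
clique, the intersection of two new hyperplanes `H ≠ H'` is already `H ∩ X` for an old hyperplane
`X`, so deletion–restriction removes, for each new `H`, the restriction of the old arrangement to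
`H`. The basis vector `e_{v_k}` lies in every old intersection but not in `H`, so intersecting
with `H` lowers every dimension by one and this restriction is the old characteristic polynomial
divided by `t`. Each step therefore multiplies `χ` by `t - r |E_{<k}| - 1`.
-/

section AltInfSum

variable {α L R : Type*} [SemilatticeInf L] [OrderTop L] [CommRing R]

def altInfSum (s : Finset α) (f : α → L) (w : L → R) : R :=
  ∑ I ∈ s.powerset, (-1) ^ I.card * w (I.inf f)

theorem altInfSum_insert [DecidableEq α] {s : Finset α} {a : α} (ha : a ∉ s) (f : α → L)
    (w : L → R) :
    altInfSum (insert a s) f w = altInfSum s f w - altInfSum s f (fun X => w (f a ⊓ X)) := by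
  rw [altInfSum, sum_powerset_insert ha, sub_eq_add_neg, altInfSum, altInfSum, ← sum_neg_distrib]
  congr 1
  refine sum_congr rfl fun I hI => ?_
  rw [card_insert_of_notMem fun h => ha (mem_powerset.1 hI h), inf_insert, pow_succ]
  ring

theorem altInfSum_inf_eq_zero {s : Finset α} {b : α} (hb : b ∈ s) (f : α → L) (w : L → R) :
    altInfSum s f (fun X => w (f b ⊓ X)) = 0 := by
  rw [← insert_erase hb, altInfSum_insert (notMem_erase b s)]
  simp only [inf_left_idem, sub_self]

theorem altInfSum_eq_image [DecidableEq L] (s : Finset α) (f : α → L) (w : L → R) :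
    altInfSum s f w = altInfSum (s.image f) id w := by
  induction s using Finset.induction_on generalizing w with
  | empty => simp [altInfSum]
  | insert a s ha ih =>
    rw [altInfSum_insert ha, ih, ih, image_insert]
    by_cases hfa : f a ∈ s.image f
    · have hcancel : altInfSum (s.image f) id (fun X => w (f a ⊓ X)) = 0 :=
        altInfSum_inf_eq_zero (f := id) hfa w
      rw [insert_eq_of_mem hfa, hcancel, sub_zero]
    · rw [altInfSum_insert hfa]
      rfl

theorem inf_finsetInf_inf_left (H : L) (I : Finset α) (f : α → L) :
    H ⊓ I.inf (fun a => H ⊓ f a) = H ⊓ I.inf f := by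
  rcases I.eq_empty_or_nonempty with rfl | hI
  · simp
  · change H ⊓ I.inf ((fun _ => H) ⊓ f) = _
    rw [inf_inf, inf_const hI, ← inf_assoc, inf_idem]

theorem altInfSum_inf_left [DecidableEq L] (s : Finset α) (f : α → L) (H : L) (w : L → R) :
    altInfSum s f (fun X => w (H ⊓ X)) =
      altInfSum (s.image fun a => H ⊓ f a) id (fun X => w (H ⊓ X)) := by
  rw [← altInfSum_eq_image]
  exact sum_congr rfl fun I _ => by simp only [inf_finsetInf_inf_left]

theorem altInfSum_union [DecidableEq L] {A B : Finset L} (hAB : Disjoint A B)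
    (hmod : ∀ H ∈ B, ∀ H' ∈ B, H' ≠ H → H ⊓ H' ∈ A.image (H ⊓ ·)) (w : L → R) :
    altInfSum (A ∪ B) id w = altInfSum A id w - ∑ H ∈ B, altInfSum A id (fun X => w (H ⊓ X)) := by
  induction B using Finset.induction_on with
  | empty => simp
  | insert H B hH ih =>
    have hHAB : H ∉ A ∪ B := by
      simp [hH, disjoint_right.1 hAB (mem_insert_self H B)]
    have hrestrict : (A ∪ B).image (H ⊓ ·) = A.image (H ⊓ ·) := by
      refine Subset.antisymm (fun Y hY => ?_) (image_subset_image subset_union_left)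
      obtain ⟨H', hH', rfl⟩ := mem_image.1 hY
      rcases mem_union.1 hH' with hA | hB
      · exact mem_image_of_mem _ hA
      · exact hmod H (mem_insert_self H B) H' (mem_insert_of_mem hB) (ne_of_mem_of_not_mem hB hH)
    have hres :
        altInfSum (A ∪ B) id (fun X => w (H ⊓ X)) = altInfSum A id (fun X => w (H ⊓ X)) := by
      rw [altInfSum_inf_left, altInfSum_inf_left A]
      simp only [id_eq, hrestrict]
    rw [union_insert, altInfSum_insert hHAB, id, hres, sum_insert hH,
      ih (disjoint_insert_right.1 hAB).2 fun H₁ h₁ H₂ h₂ =>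
        hmod H₁ (mem_insert_of_mem h₁) H₂ (mem_insert_of_mem h₂)]
    ring

end AltInfSum

theorem Module.Dual.finrank_ker_inf_add_one {K M : Type*} [Field K] [AddCommGroup M] [Module K M]
    [FiniteDimensional K M] {f : Module.Dual K M} {X : Submodule K M} {u : M} (hu : u ∈ X)
    (hfu : f u ≠ 0) : Module.finrank K ↥(LinearMap.ker f ⊓ X) + 1 = Module.finrank K X := by
  have hf : f.domRestrict X ≠ 0 := fun h => hfu (LinearMap.congr_fun h ⟨u, hu⟩)
  rw [← Module.Dual.finrank_ker_add_one_of_ne_zero hf, LinearMap.ker_domRestrict,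
    ← Submodule.finrank_map_subtype_eq, Submodule.map_comap_subtype, inf_comm]

section GraphArrangement

variable {K V : Type*} [Field K]

variable (K) in
def coordHyperplane (i : V) : Submodule K (V → K) :=
  LinearMap.ker (LinearMap.proj i)

def edgeHyperplane (a b : V) (ζ : K) : Submodule K (V → K) :=
  LinearMap.ker (LinearMap.proj a - ζ • LinearMap.proj b)

@[simp]
theorem mem_coordHyperplane {i : V} {x : V → K} : x ∈ coordHyperplane K i ↔ x i = 0 :=
  Iff.rfl

@[simp]
theorem mem_edgeHyperplane {a b : V} {ζ : K} {x : V → K} :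
    x ∈ edgeHyperplane a b ζ ↔ x a = ζ * x b := by
  simp [edgeHyperplane, sub_eq_zero]

theorem edgeHyperplane_swap {a b : V} {ζ : K} (hζ : ζ ≠ 0) :
    edgeHyperplane a b ζ = edgeHyperplane b a ζ⁻¹ := by
  ext x
  simp only [mem_edgeHyperplane]
  constructor <;> intro h <;> rw [h]
  exacts [(inv_mul_cancel_left₀ hζ _).symm, (mul_inv_cancel_left₀ hζ _).symm]

theorem coordHyperplane_inf_edgeHyperplane (a m : V) (ζ : K) :
    coordHyperplane K m ⊓ edgeHyperplane a m ζ = coordHyperplane K m ⊓ coordHyperplane K a := by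
  ext x
  simp only [Submodule.mem_inf, mem_coordHyperplane, mem_edgeHyperplane]
  constructor <;> rintro ⟨hm, ha⟩ <;> simp_all

theorem edgeHyperplane_inf_coordHyperplane {a m : V} {ζ : K} (hζ : ζ ≠ 0) :
    edgeHyperplane a m ζ ⊓ coordHyperplane K m = edgeHyperplane a m ζ ⊓ coordHyperplane K a := by
  ext x
  simp only [Submodule.mem_inf, mem_coordHyperplane, mem_edgeHyperplane]
  constructor <;> rintro ⟨he, h0⟩ <;> simp_all

theorem edgeHyperplane_inf_edgeHyperplane_self {a m : V} {ζ ζ' : K} (hζ : ζ ≠ 0)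
    (hζζ' : ζ ≠ ζ') :
    edgeHyperplane a m ζ ⊓ edgeHyperplane a m ζ' = edgeHyperplane a m ζ ⊓ coordHyperplane K a := by
  ext x
  simp only [Submodule.mem_inf, mem_coordHyperplane, mem_edgeHyperplane]
  constructor
  · rintro ⟨he, he'⟩
    have hxm : x m = 0 := by
      have : (ζ - ζ') * x m = 0 := by linear_combination he' - he
      exact (mul_eq_zero.1 this).resolve_left (sub_ne_zero.2 hζζ')
    simp [he, hxm]
  · rintro ⟨he, h0⟩
    have hxm : x m = 0 := by simp_all
    simp [he, hxm]

theorem edgeHyperplane_inf_edgeHyperplane {a a' m : V} {ζ ζ' : K} (hζ : ζ ≠ 0) (hζ' : ζ' ≠ 0) :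
    edgeHyperplane a m ζ ⊓ edgeHyperplane a' m ζ' =
      edgeHyperplane a m ζ ⊓ edgeHyperplane a a' (ζ / ζ') := by
  ext x
  simp only [Submodule.mem_inf, mem_edgeHyperplane]
  constructor
  · rintro ⟨he, he'⟩
    refine ⟨he, ?_⟩
    rw [he, he']
    field_simp
  · rintro ⟨he, he'⟩
    refine ⟨he, ?_⟩
    rw [he] at he'
    field_simp at he'
    linear_combination he'.symm

variable (μ : Finset K) (G : SimpleGraph V)

-- The arrangement of the subgraph induced on `S`, still in `V → K`: coordinates outside `S` are
-- free, which is where the factor `X ^ (ℓ - n)` below comes from.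
noncomputable def graphArr (S : Finset V) : Finset (Submodule K (V → K)) :=
  S.image (coordHyperplane K) ∪
    (((S ×ˢ S).filter fun p => G.Adj p.1 p.2) ×ˢ μ).image fun q => edgeHyperplane q.1.1 q.1.2 q.2

noncomputable def vertexBlock (S : Finset V) (m : V) : Finset (Submodule K (V → K)) :=
  insert (coordHyperplane K m)
    (((S.filter (G.Adj · m)) ×ˢ μ).image fun q => edgeHyperplane q.1 m q.2)

variable {μ G}

theorem mem_graphArr {S : Finset V} {X : Submodule K (V → K)} :
    X ∈ graphArr μ G S ↔ (∃ i ∈ S, coordHyperplane K i = X) ∨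
      ∃ a ∈ S, ∃ b ∈ S, G.Adj a b ∧ ∃ ζ ∈ μ, edgeHyperplane a b ζ = X := by
  simp [graphArr, and_assoc]

theorem mem_vertexBlock {S : Finset V} {m : V} {X : Submodule K (V → K)} :
    X ∈ vertexBlock μ G S m ↔ X = coordHyperplane K m ∨
      ∃ a ∈ S, G.Adj a m ∧ ∃ ζ ∈ μ, edgeHyperplane a m ζ = X := by
  simp [vertexBlock, and_assoc]

theorem graphArr_insert (h0 : (0 : K) ∉ μ) (hdiv : ∀ ζ ∈ μ, ∀ ξ ∈ μ, ζ / ξ ∈ μ) (S : Finset V)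
    (m : V) : graphArr μ G (insert m S) = graphArr μ G S ∪ vertexBlock μ G S m := by
  have hinv : ∀ ζ ∈ μ, ζ⁻¹ ∈ μ := fun ζ hζ => by
    simpa [div_self (ne_of_mem_of_not_mem hζ h0)] using hdiv _ (hdiv ζ hζ ζ hζ) ζ hζ
  ext X
  simp only [mem_union, mem_graphArr, mem_vertexBlock, mem_insert]
  constructor
  · rintro (⟨i, rfl | hi, rfl⟩ | ⟨a, rfl | ha, b, rfl | hb, hab, ζ, hζ, rfl⟩)
    · exact Or.inr (Or.inl rfl)
    · exact Or.inl (Or.inl ⟨i, hi, rfl⟩)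
    · exact (hab.ne rfl).elim
    · exact Or.inr (Or.inr ⟨b, hb, hab.symm, ζ⁻¹, hinv ζ hζ,
        (edgeHyperplane_swap (ne_of_mem_of_not_mem hζ h0)).symm⟩)
    · exact Or.inr (Or.inr ⟨a, ha, hab, ζ, hζ, rfl⟩)
    · exact Or.inl (Or.inr ⟨a, ha, b, hb, hab, ζ, hζ, rfl⟩)
  · rintro ((⟨i, hi, rfl⟩ | ⟨a, ha, b, hb, hab, ζ, hζ, rfl⟩) | (rfl | ⟨a, ha, ham, ζ, hζ, rfl⟩))
    · exact Or.inl ⟨i, Or.inr hi, rfl⟩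
    · exact Or.inr ⟨a, Or.inr ha, b, Or.inr hb, hab, ζ, hζ, rfl⟩
    · exact Or.inl ⟨m, Or.inl rfl, rfl⟩
    · exact Or.inr ⟨a, Or.inr ha, m, Or.inl rfl, ham, ζ, hζ, rfl⟩

theorem single_mem_of_mem_graphArr {S : Finset V} {i : V} (hi : i ∉ S)
    {X : Submodule K (V → K)} (hX : X ∈ graphArr μ G S) : Pi.single i (1 : K) ∈ X := by
  rcases mem_graphArr.1 hX with ⟨j, hj, rfl⟩ | ⟨a, ha, b, hb, -, ζ, -, rfl⟩
  · simp [ne_of_mem_of_not_mem hj hi]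
  · simp [ne_of_mem_of_not_mem ha hi, ne_of_mem_of_not_mem hb hi]

theorem exists_dual_of_mem_vertexBlock (h0 : (0 : K) ∉ μ) {S : Finset V} {m : V}
    {H : Submodule K (V → K)} (hH : H ∈ vertexBlock μ G S m) :
    ∃ f : Module.Dual K (V → K), LinearMap.ker f = H ∧ f (Pi.single m 1) ≠ 0 := by
  rcases mem_vertexBlock.1 hH with rfl | ⟨a, -, ham, ζ, hζ, rfl⟩
  · exact ⟨LinearMap.proj m, rfl, by simp⟩
  · refine ⟨LinearMap.proj a - ζ • LinearMap.proj m, rfl, ?_⟩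
    simpa [ham.ne] using ne_of_mem_of_not_mem hζ h0

theorem disjoint_graphArr_vertexBlock (h0 : (0 : K) ∉ μ) {S : Finset V} {m : V} (hm : m ∉ S) :
    Disjoint (graphArr μ G S) (vertexBlock μ G S m) := by
  refine disjoint_left.2 fun H hA hB => ?_
  obtain ⟨f, rfl, hf⟩ := exists_dual_of_mem_vertexBlock h0 hB
  exact hf (single_mem_of_mem_graphArr hm hA)

theorem eq_and_eq_of_edgeHyperplane_eq {a a' m : V} {ζ ζ' : K} (ham : a ≠ m) (ha'm : a' ≠ m)
    (hζ' : ζ' ≠ 0)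
    (h : edgeHyperplane a m ζ = edgeHyperplane a' m ζ') : a = a' ∧ ζ = ζ' := by
  have hx : Pi.single a ζ + Pi.single m 1 ∈ edgeHyperplane a' m ζ' := by
    rw [← h]
    simp [ham]
  by_cases haa' : a = a'
  · subst haa'
    simpa [ham] using hx
  · simp [ham, ha'm, Ne.symm haa'] at hx
    exact absurd hx.symm hζ'

theorem coordHyperplane_ne_edgeHyperplane {a m : V} (ham : a ≠ m) (ζ : K) :
    coordHyperplane K m ≠ edgeHyperplane a m ζ := by
  intro h
  have hx : Pi.single a (1 : K) ∈ edgeHyperplane a m ζ := by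
    rw [← h]
    simp [Ne.symm ham]
  simp [Ne.symm ham] at hx

theorem card_vertexBlock (h0 : (0 : K) ∉ μ) (S : Finset V) (m : V) :
    #(vertexBlock μ G S m) = #μ * #(S.filter (G.Adj · m)) + 1 := by
  rw [vertexBlock, card_insert_of_notMem, card_image_of_injOn, card_product, mul_comm]
  · rintro ⟨a, ζ⟩ hq ⟨a', ζ'⟩ hq' h
    simp only [coe_product, Set.mem_prod, mem_coe, mem_filter] at hq hq'
    obtain ⟨rfl, rfl⟩ :=
      eq_and_eq_of_edgeHyperplane_eq hq.1.2.ne hq'.1.2.ne (ne_of_mem_of_not_mem hq'.2 h0) h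
    rfl
  · simp only [mem_image, mem_product, mem_filter, Prod.exists, not_exists, not_and]
    exact fun a ζ ⟨⟨_, ham⟩, _⟩ h => coordHyperplane_ne_edgeHyperplane ham.ne ζ h.symm

theorem inf_mem_image_inf_of_mem_vertexBlock (h0 : (0 : K) ∉ μ)
    (hdiv : ∀ ζ ∈ μ, ∀ ξ ∈ μ, ζ / ξ ∈ μ) {S : Finset V} {m : V}
    (hclique : G.IsClique (S.filter (G.Adj · m) : Set V))
    {H H' : Submodule K (V → K)} (hH : H ∈ vertexBlock μ G S m) (hH' : H' ∈ vertexBlock μ G S m)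
    (hne : H' ≠ H) : H ⊓ H' ∈ (graphArr μ G S).image (H ⊓ ·) := by
  have hcoord : ∀ a ∈ S, coordHyperplane K a ∈ graphArr μ G S := fun a ha =>
    mem_graphArr.2 (Or.inl ⟨a, ha, rfl⟩)
  rcases mem_vertexBlock.1 hH with rfl | ⟨a, ha, ham, ζ, hζ, rfl⟩ <;>
    rcases mem_vertexBlock.1 hH' with rfl | ⟨a', ha', ha'm, ζ', hζ', rfl⟩
  · exact absurd rfl hne
  · exact mem_image.2 ⟨_, hcoord a' ha', (coordHyperplane_inf_edgeHyperplane a' m ζ').symm⟩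
  · exact mem_image.2 ⟨_, hcoord a ha,
      (edgeHyperplane_inf_coordHyperplane (ne_of_mem_of_not_mem hζ h0)).symm⟩
  · by_cases haa' : a = a'
    · subst haa'
      have hζζ' : ζ ≠ ζ' := fun h => hne (by rw [h])
      exact mem_image.2 ⟨_, hcoord a ha,
        (edgeHyperplane_inf_edgeHyperplane_self (ne_of_mem_of_not_mem hζ h0) hζζ').symm⟩
    · refine mem_image.2 ⟨edgeHyperplane a a' (ζ / ζ'), ?_,
        (edgeHyperplane_inf_edgeHyperplane (ne_of_mem_of_not_mem hζ h0)
          (ne_of_mem_of_not_mem hζ' h0)).symm⟩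
      have hadj : G.Adj a a' := hclique (mem_filter.2 ⟨ha, ham⟩) (mem_filter.2 ⟨ha', ha'm⟩) haa'
      exact mem_graphArr.2 (Or.inr ⟨a, ha, a', ha', hadj, _, hdiv ζ hζ ζ' hζ', rfl⟩)

theorem finrank_inf_add_one_of_mem_vertexBlock [Fintype V] (h0 : (0 : K) ∉ μ) {S : Finset V}
    {m : V} (hm : m ∉ S) {H : Submodule K (V → K)} (hH : H ∈ vertexBlock μ G S m)
    {J : Finset (Submodule K (V → K))} (hJ : J ⊆ graphArr μ G S) :
    Module.finrank K ↥(H ⊓ J.inf id) + 1 = Module.finrank K ↥(J.inf id) := by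
  obtain ⟨f, rfl, hf⟩ := exists_dual_of_mem_vertexBlock h0 hH
  exact Module.Dual.finrank_ker_inf_add_one
    (Submodule.mem_finsetInf.2 fun X hX => single_mem_of_mem_graphArr hm (hJ hX)) hf

end GraphArrangement

section CharPoly

open Polynomial

noncomputable def charPoly {K M : Type*} [Field K] [AddCommGroup M] [Module K M]
    (A : Finset (Submodule K M)) : ℤ[X] :=
  altInfSum A id fun Y => X ^ Module.finrank K Y

theorem eval_charPoly {K V : Type} [Field K] [Fintype V] (A : Finset (Submodule K (V → K)))
    (t : ℤ) : (charPoly A).eval t = chi A t := by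
  simp [charPoly, altInfSum, chi, eval_finsetSum]

variable {K V : Type*} [Field K] [Fintype V] {μ : Finset K} {G : SimpleGraph V}

theorem charPoly_graphArr_empty : charPoly (graphArr μ G ∅) = X ^ Fintype.card V := by
  have hempty : graphArr μ G (∅ : Finset V) = ∅ := by simp [graphArr]
  rw [charPoly, altInfSum, hempty, powerset_empty, sum_singleton, card_empty, pow_zero, one_mul,
    inf_empty, finrank_top, Module.finrank_fintype_fun_eq_card]

theorem X_mul_charPoly_graphArr_insert (h0 : (0 : K) ∉ μ) (hdiv : ∀ ζ ∈ μ, ∀ ξ ∈ μ, ζ / ξ ∈ μ)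
    {S : Finset V} {m : V} (hm : m ∉ S) (hclique : G.IsClique (S.filter (G.Adj · m) : Set V)) :
    X * charPoly (graphArr μ G (insert m S)) =
      (X - ((#μ * #(S.filter (G.Adj · m)) + 1 : ℕ) : ℤ[X])) * charPoly (graphArr μ G S) := by
  have hrestrict : ∀ H ∈ vertexBlock μ G S m,
      X * altInfSum (graphArr μ G S) id (fun Y => X ^ Module.finrank K ↥(H ⊓ Y)) =
        charPoly (graphArr μ G S) := fun H hH => by
    rw [altInfSum, mul_sum]
    refine sum_congr rfl fun J hJ => ?_
    dsimp only
    rw [← finrank_inf_add_one_of_mem_vertexBlock h0 hm hH (mem_powerset.1 hJ), pow_succ]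
    ring
  rw [graphArr_insert h0 hdiv, charPoly,
    altInfSum_union (disjoint_graphArr_vertexBlock h0 hm)
      (fun H hH H' hH' => inf_mem_image_inf_of_mem_vertexBlock h0 hdiv hclique hH hH'),
    ← charPoly, mul_sub, mul_sum, sum_congr rfl hrestrict, sum_const, card_vertexBlock h0,
    nsmul_eq_mul]
  ring

end CharPoly

section EliminationOrder

open Polynomial

variable {K V : Type*} [Field K] [Fintype V] {μ : Finset K} {G : SimpleGraph V} {ℓ : ℕ}

def IsPerfectEliminationOrder (G : SimpleGraph V) (v : Fin ℓ ≃ V) : Prop :=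
  ∀ k j l : Fin ℓ, j < k → l < k → j ≠ l →
    G.Adj (v j) (v k) → G.Adj (v l) (v k) → G.Adj (v j) (v l)

theorem charPoly_graphArr_map_prefix (h0 : (0 : K) ∉ μ) (hdiv : ∀ ζ ∈ μ, ∀ ξ ∈ μ, ζ / ξ ∈ μ)
    {v : Fin ℓ ≃ V} (hv : IsPerfectEliminationOrder G v) {n : ℕ} (hn : n ≤ ℓ) :
    charPoly (graphArr μ G ((univ.filter fun j : Fin ℓ => (j : ℕ) < n).map v.toEmbedding)) =
      X ^ (ℓ - n) * ∏ k ∈ univ.filter (fun k : Fin ℓ => (k : ℕ) < n),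
        (X - ((#μ * #(univ.filter fun j => j < k ∧ G.Adj (v j) (v k)) + 1 : ℕ) : ℤ[X])) := by
  induction n with
  | zero =>
    simp [charPoly_graphArr_empty, ← Fintype.card_congr v]
  | succ n ih =>
    have hnℓ : n < ℓ := hn
    set k : Fin ℓ := ⟨n, hnℓ⟩
    set P := (univ.filter fun j : Fin ℓ => (j : ℕ) < n).map v.toEmbedding
    have hidx : (univ.filter fun j : Fin ℓ => (j : ℕ) < n + 1) =
        insert k (univ.filter fun j : Fin ℓ => (j : ℕ) < n) := by
      ext j
      simp only [mem_filter, mem_univ, true_and, mem_insert, k, Fin.ext_iff]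
      omega
    have hk : v k ∉ P := by simp [P, k]
    have hclique : G.IsClique (P.filter (G.Adj · (v k)) : Set V) := by
      intro a ha a' ha' haa'
      simp only [P, coe_filter, mem_map, mem_filter, mem_univ, true_and, Equiv.coe_toEmbedding,
        Set.mem_ofPred_eq] at ha ha'
      obtain ⟨⟨j, hj, rfl⟩, hjk⟩ := ha
      obtain ⟨⟨l, hl, rfl⟩, hlk⟩ := ha'
      exact hv k j l hj hl (fun h => haa' (congrArg v h)) hjk hlk
    have hnbr :
        #(P.filter (G.Adj · (v k))) = #(univ.filter fun j => j < k ∧ G.Adj (v j) (v k)) := by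
      rw [filter_map, card_map, filter_filter]
      rfl
    -- cancelling `X` is why we work in `ℤ[X]`: at the integer `t = 0` it would be impossible
    apply mul_left_cancel₀ (X_ne_zero (R := ℤ))
    rw [hidx, map_insert, Equiv.coe_toEmbedding, X_mul_charPoly_graphArr_insert h0 hdiv hk hclique,
      ih hnℓ.le, hnbr, prod_insert (by simp [k]), show ℓ - n = ℓ - (n + 1) + 1 by omega, pow_succ]
    ring

theorem charPoly_graphArr_univ (h0 : (0 : K) ∉ μ) (hdiv : ∀ ζ ∈ μ, ∀ ξ ∈ μ, ζ / ξ ∈ μ)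
    {v : Fin ℓ ≃ V} (hv : IsPerfectEliminationOrder G v) :
    charPoly (graphArr μ G univ) = ∏ k : Fin ℓ,
      (X - ((#μ * #(univ.filter fun j => j < k ∧ G.Adj (v j) (v k)) + 1 : ℕ) : ℤ[X])) := by
  simpa using charPoly_graphArr_map_prefix h0 hdiv hv le_rfl

end EliminationOrder

theorem div_mem_nthRootsFinset {K : Type*} [Field K] {n : ℕ} {a b η ξ : K}
    (hη : η ∈ Polynomial.nthRootsFinset n a) (hξ : ξ ∈ Polynomial.nthRootsFinset n b) :
    η / ξ ∈ Polynomial.nthRootsFinset n (a / b) := by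
  rcases n.eq_zero_or_pos with rfl | hn
  · simp at hη
  · rw [Polynomial.mem_nthRootsFinset hn] at hη hξ ⊢
    rw [div_pow, hη, hξ]

theorem IsPrimitiveRoot.image_range_pow_succ {K : Type*} [Field K] {z : K} {r : ℕ}
    (hz : IsPrimitiveRoot z r) :
    (range r).image (fun k => z ^ (k + 1)) = Polynomial.nthRootsFinset r (1 : K) := by
  rcases r.eq_zero_or_pos with rfl | hr
  · simp
  refine eq_of_subset_of_card_le (fun ζ hζ => ?_) ?_
  · obtain ⟨k, -, rfl⟩ := mem_image.1 hζ
    rw [Polynomial.mem_nthRootsFinset hr, ← pow_mul, mul_comm, pow_mul, hz.pow_eq_one, one_pow]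
  · rw [hz.card_nthRootsFinset, card_image_of_injOn, card_range]
    intro k hk k' hk' h
    simp only [pow_succ] at h
    exact hz.pow_inj (mem_range.1 hk) (mem_range.1 hk') (mul_right_cancel₀ (hz.ne_zero hr.ne') h)

theorem monArr_eq_graphArr (K : Type) [Field K] (z : K) (r : ℕ) {V : Type} [Fintype V]
    (G : SimpleGraph V) :
    monArr K z r G = graphArr ((range r).image fun k => z ^ (k + 1)) G univ := by
  ext X
  simp [monArr, mem_graphArr, coordHyperplane, edgeHyperplane]

theorem stmt13_general (ℓ : ℕ) (K : Type) [Field K] (r : ℕ)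
    (z : K) (hz : IsPrimitiveRoot z r)
    (G : SimpleGraph (Fin ℓ)) (v : Equiv.Perm (Fin ℓ))
    (hPEO : ∀ k j l : Fin ℓ, j < k → l < k → j ≠ l →
      G.Adj (v j) (v k) → G.Adj (v l) (v k) → G.Adj (v j) (v l))
    (t : ℤ) :
    chi (monArr K z r G) t
      = ∏ k : Fin ℓ,
          (t - (r : ℤ) * ((Finset.univ.filter
              fun j : Fin ℓ => j < k ∧ G.Adj (v j) (v k)).card : ℤ) - 1) := by
  have h0 : (0 : K) ∉ Polynomial.nthRootsFinset r (1 : K) := fun h =>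
    Polynomial.ne_zero_of_mem_nthRootsFinset one_ne_zero h rfl
  have hdiv : ∀ ζ ∈ Polynomial.nthRootsFinset r (1 : K), ∀ ξ ∈ Polynomial.nthRootsFinset r (1 : K),
      ζ / ξ ∈ Polynomial.nthRootsFinset r (1 : K) := fun ζ hζ ξ hξ => by
    simpa using div_mem_nthRootsFinset hζ hξ
  rw [← eval_charPoly, monArr_eq_graphArr, hz.image_range_pow_succ,
    charPoly_graphArr_univ h0 hdiv hPEO, Polynomial.eval_prod, hz.card_nthRootsFinset]
  refine prod_congr rfl fun k _ => ?_
  simp only [Polynomial.eval_sub, Polynomial.eval_X, Polynomial.eval_natCast]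
  push_cast
  ring

/-- Let `G` be a chordal graph on `{1,…,ℓ}` with a perfect
elimination ordering `(v_1,…,v_ℓ)` and let `z ∈ 𝕂` be a primitive `r`-th root of
unity.  Then `χ(M(G,r), t) = ∏_{k=1}^{ℓ} (t − r·|E_{<k}| − 1)`, where
`E_{<k} = {j < k : {v_j,v_k} ∈ E}`. -/
theorem stmt13 (ℓ : ℕ) (K : Type) [Field K] (r : ℕ) (hr : 0 < r)
    (z : K) (hz : IsPrimitiveRoot z r)
    (G : SimpleGraph (Fin ℓ)) (v : Equiv.Perm (Fin ℓ))
    (hPEO : ∀ k j l : Fin ℓ, j < k → l < k → j ≠ l →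
      G.Adj (v j) (v k) → G.Adj (v l) (v k) → G.Adj (v j) (v l))
    (t : ℤ) :
    chi (monArr K z r G) t
      = ∏ k : Fin ℓ,
          (t - (r : ℤ) * ((Finset.univ.filter
              fun j : Fin ℓ => j < k ∧ G.Adj (v j) (v k)).card : ℤ) - 1) :=
  stmt13_general ℓ K r z hz G v hPEO t
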